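/- arXiv:1802.04656 — 2 statements merged into one kernel-verified Lean document; each statement's English description precedes it below -/
import Mathlib

section
/- Let $\omega$ be a $C^1$ vector field's scalar quantity (a $C^1$ function) defined on $\{z \in \mathbb{R}^2 : |z| > R_0\}$ satisfying: (a) $\int_{|z|>R_0} r|\nabla\omega|^2 \, d\mathcal{H}^2 < \infty$ where $r = |z|$, and (b) $|\nabla\omega(z)| \to 0$ uniformly as $|z| \to \infty$. Then $\int_{D_z} \frac{1}{|\xi - z|} |\nabla\omega(\xi)| \, d\mathcal{H}^2_\xi \to 0$ uniformly as $|z| \to \infty$, where $D_z = \{\xi \in \mathbb{R}^2 : |\xi - z| \le \frac{4}{5}|z|\}$. -/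
/-!
Split `D_z` at a radius `r₁` around `z`. Write `d = |ξ - z|`. Outside the disk we use
`|∇ω|/d ≤ d⁻³ + d |∇ω|²`; since the plane is two-dimensional, `d⁻³` is integrable at infinity,
so `r₁` can be chosen to make its tail small. As `d⁻¹` is locally integrable, `δ` can then be
chosen so that `δ ∫_{d < r₁} d⁻¹` is small, and `|∇ω| ≤ δ` on the disk once `|z|` is large.
Finally `d ≤ 4|ξ|` and `|ξ| ≥ |z|/5` on `D_z`, so `∫ d |∇ω|²` is at most four times a tail of
the finite integral `∫ r |∇ω|²`.
-/

open MeasureTheory Real Set Metric Filter Topology Module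
open scoped ENNReal

theorem div_le_inv_pow_three_add_mul_sq {d : ℝ} (hd : 0 ≤ d) (a : ℝ) :
    a / d ≤ (d ^ 3)⁻¹ + d * a ^ 2 := by
  rcases hd.eq_or_lt with rfl | hd
  · simp -- both sides vanish, since `a / 0 = 0` and `0⁻¹ = 0`
  have hd3 : 0 < d ^ 3 := by positivity
  calc a / d = a * d ^ 2 / d ^ 3 := by field_simp
    _ ≤ (1 + d ^ 4 * a ^ 2) / d ^ 3 := by gcongr; nlinarith [sq_nonneg (d ^ 2 * a - 1)]
    _ = (d ^ 3)⁻¹ + d * a ^ 2 := by field_simp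

theorem tendsto_setLIntegral_setOf_le_atTop {α : Type*} [MeasurableSpace α] {μ : Measure α}
    {φ : α → ℝ} (hφ : Measurable φ) {f : α → ℝ≥0∞} (hf : ∫⁻ x, f x ∂μ ≠ ∞) :
    Tendsto (fun R => ∫⁻ x in {x | R ≤ φ x}, f x ∂μ) atTop (𝓝 0) := by
  have hmeas (R : ℝ) : MeasurableSet {x | R ≤ φ x} := measurableSet_le measurable_const hφ
  have hempty : ⋂ R : ℝ, {x | R ≤ φ x} = ∅ :=
    eq_empty_of_forall_notMem fun x hx => (lt_add_one (φ x)).not_ge (mem_iInter.mp hx (φ x + 1))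
  have key := tendsto_measure_iInter_atTop (μ := μ.withDensity f)
    (fun R => (hmeas R).nullMeasurableSet) (fun R S hRS x (hx : S ≤ φ x) => hRS.trans hx)
    ⟨0, by
      rw [withDensity_apply _ (hmeas 0)]
      exact ne_top_of_le_ne_top hf (setLIntegral_le_lintegral _ _)⟩
  rw [hempty, measure_empty] at key
  exact key.congr fun R => withDensity_apply _ (hmeas R)

theorem MeasureTheory.IntegrableOn.tendsto_setLIntegral_norm_ge_atTop {E : Type*}
    [NormedAddCommGroup E] [MeasurableSpace E] [OpensMeasurableSpace E] {μ : Measure E}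
    {f : E → ℝ} {R₀ : ℝ} (hf : IntegrableOn f {x | R₀ < ‖x‖} μ) :
    Tendsto (fun R => ∫⁻ x in {x | R ≤ ‖x‖}, ENNReal.ofReal (f x) ∂μ) atTop (𝓝 0) := by
  refine (tendsto_setLIntegral_setOf_le_atTop measurable_norm hf.lintegral_lt_top.ne).congr' ?_
  filter_upwards [eventually_gt_atTop R₀] with R hR
  have hsub : {x : E | R ≤ ‖x‖} ⊆ {x | R₀ < ‖x‖} := fun x (hx : R ≤ ‖x‖) => hR.trans_le hx
  rw [Measure.restrict_restrict (measurableSet_le measurable_const measurable_norm),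
    inter_eq_left.mpr hsub]

section NormPowers

variable {E : Type*} [NormedAddCommGroup E] [NormedSpace ℝ E] [FiniteDimensional ℝ E]
  [Nontrivial E] [MeasurableSpace E] [BorelSpace E] (μ : Measure E) [μ.IsAddHaarMeasure]

theorem setLIntegral_ball_norm_rpow_neg_ne_top {α : ℝ} (hα : α < finrank ℝ E) (r : ℝ) :
    ∫⁻ x in ball 0 r, ENNReal.ofReal (‖x‖ ^ (-α)) ∂μ ≠ ∞ :=
  (integrableOn_ball_of_norm_le_rpow finrank_pos hα (C := 1)
    (ae_of_all _ fun x => by simp [abs_of_nonneg (rpow_nonneg (norm_nonneg x) _)])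
    (measurable_norm.pow_const _).aestronglyMeasurable).lintegral_lt_top.ne

theorem integrableOn_one_lt_norm_rpow_neg {β : ℝ} (hβ : finrank ℝ E < β) :
    IntegrableOn (fun x => ‖x‖ ^ (-β)) {x | 1 < ‖x‖} μ := by
  rw [← integrable_indicator_iff (measurableSet_lt measurable_const measurable_norm)]
  change Integrable (fun x => (Ioi 1).indicator (fun y : ℝ => y ^ (-β)) ‖x‖) μ
  rw [integrable_fun_norm_addHaar μ]
  have hpow : IntegrableOn (fun y : ℝ => y ^ ((finrank ℝ E : ℝ) - 1 - β)) (Ioi 1) :=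
    integrableOn_Ioi_rpow_of_lt (by linarith) one_pos
  refine ((integrable_indicator_iff measurableSet_Ioi).mpr hpow).integrableOn.congr_fun
    (fun y (hy : 0 < y) => ?_) measurableSet_Ioi
  by_cases hy1 : y ∈ Ioi 1
  · rw [indicator_of_mem hy1, indicator_of_mem hy1, smul_eq_mul, ← rpow_natCast, ← rpow_add hy,
      Nat.cast_sub finrank_pos, Nat.cast_one, sub_eq_add_neg _ β]
  · simp [indicator_of_notMem hy1]

end NormPowers

theorem exists_setLIntegral_inv_norm_add_tail_lt {E : Type*} [NormedAddCommGroup E]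
    [NormedSpace ℝ E] [FiniteDimensional ℝ E] [MeasurableSpace E] [BorelSpace E]
    (μ : Measure E) [μ.IsAddHaarMeasure] (hE : finrank ℝ E = 2) {ε : ℝ≥0∞} (hε : ε ≠ 0) :
    ∃ r δ : ℝ, 0 < δ ∧
      ENNReal.ofReal δ * ∫⁻ x in ball 0 r, ENNReal.ofReal ‖x‖⁻¹ ∂μ
        + ∫⁻ x in {x | r ≤ ‖x‖}, ENNReal.ofReal (‖x‖ ^ 3)⁻¹ ∂μ < ε := by
  have : Nontrivial E := nontrivial_of_finrank_eq_succ hE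
  have hε2 := (ENNReal.half_pos hε).ne'
  obtain ⟨r, htail⟩ := ((integrableOn_one_lt_norm_rpow_neg μ (β := 3) (by rw [hE]; norm_num)
    ).tendsto_setLIntegral_norm_ge_atTop.eventually (gt_mem_nhds (pos_iff_ne_zero.mpr hε2))).exists
  obtain ⟨δ, hδ, hball⟩ := ENNReal.exists_nnreal_pos_mul_lt
    (setLIntegral_ball_norm_rpow_neg_ne_top μ (α := 1) (by rw [hE]; norm_num) r) hε2
  refine ⟨r, δ, hδ, ?_⟩
  calc _ < ε / 2 + ε / 2 := ENNReal.add_lt_add (by simpa [rpow_neg_one] using hball)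
        (by simpa [rpow_neg (norm_nonneg _)] using htail)
    _ = ε := ENNReal.add_halves ε

section KernelSplit

variable {E : Type*} [NormedAddCommGroup E] [MeasurableSpace E] [BorelSpace E] {μ : Measure E}

theorem setLIntegral_comp_dist_eq [μ.IsAddRightInvariant] (z : E) (t : Set ℝ) (g : ℝ → ℝ≥0∞) :
    ∫⁻ ξ in {ξ | dist ξ z ∈ t}, g (dist ξ z) ∂μ = ∫⁻ x in {x | ‖x‖ ∈ t}, g ‖x‖ ∂μ := by
  simp only [dist_eq_norm]
  exact (measurePreserving_sub_right μ z).setLIntegral_comp_preimage_emb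
    (MeasurableEquiv.subRight z).measurableEmbedding (fun x => g ‖x‖) {x | ‖x‖ ∈ t}

theorem setLIntegral_div_dist_le [μ.IsAddRightInvariant] (a : E → ℝ) (z : E) {r δ : ℝ}
    (ha : ∀ ξ ∈ ball z r, a ξ ≤ δ) {s : Set E} (hs : MeasurableSet s) :
    ∫⁻ ξ in s, ENNReal.ofReal (a ξ / dist ξ z) ∂μ ≤
      ENNReal.ofReal δ * ∫⁻ x in ball 0 r, ENNReal.ofReal ‖x‖⁻¹ ∂μ
        + ∫⁻ x in {x | r ≤ ‖x‖}, ENNReal.ofReal (‖x‖ ^ 3)⁻¹ ∂μ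
        + ∫⁻ ξ in s, ENNReal.ofReal (dist ξ z * a ξ ^ 2) ∂μ := by
  have hball : ∫⁻ ξ in ball z r, ENNReal.ofReal (a ξ / dist ξ z) ∂μ ≤
      ENNReal.ofReal δ * ∫⁻ x in ball 0 r, ENNReal.ofReal ‖x‖⁻¹ ∂μ := calc
    _ ≤ ∫⁻ ξ in ball z r, ENNReal.ofReal δ * ENNReal.ofReal (dist ξ z)⁻¹ ∂μ := by
      refine setLIntegral_mono' measurableSet_ball fun ξ hξ => ?_
      rw [div_eq_mul_inv, ENNReal.ofReal_mul' (inv_nonneg.mpr dist_nonneg)]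
      gcongr
      exact ha ξ hξ
    _ = ENNReal.ofReal δ * ∫⁻ x in ball 0 r, ENNReal.ofReal ‖x‖⁻¹ ∂μ := by
      rw [lintegral_const_mul' _ _ ENNReal.ofReal_ne_top, ball_zero_eq]
      exact congrArg _ (setLIntegral_comp_dist_eq z (Iio r) fun d => ENNReal.ofReal d⁻¹)
  have hannulus : ∫⁻ ξ in s \ ball z r, ENNReal.ofReal (a ξ / dist ξ z) ∂μ ≤
      ∫⁻ x in {x | r ≤ ‖x‖}, ENNReal.ofReal (‖x‖ ^ 3)⁻¹ ∂μ
        + ∫⁻ ξ in s, ENNReal.ofReal (dist ξ z * a ξ ^ 2) ∂μ := calc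
    _ ≤ ∫⁻ ξ in s \ ball z r,
          (ENNReal.ofReal (dist ξ z ^ 3)⁻¹ + ENNReal.ofReal (dist ξ z * a ξ ^ 2)) ∂μ := by
      refine setLIntegral_mono' (hs.diff measurableSet_ball) fun ξ _ => ?_
      rw [← ENNReal.ofReal_add (by positivity) (by positivity)]
      exact ENNReal.ofReal_le_ofReal (div_le_inv_pow_three_add_mul_sq dist_nonneg _)
    _ = ∫⁻ ξ in s \ ball z r, ENNReal.ofReal (dist ξ z ^ 3)⁻¹ ∂μ
          + ∫⁻ ξ in s \ ball z r, ENNReal.ofReal (dist ξ z * a ξ ^ 2) ∂μ :=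
      lintegral_add_left (by fun_prop) _
    _ ≤ ∫⁻ ξ in {ξ | dist ξ z ∈ Ici r}, ENNReal.ofReal (dist ξ z ^ 3)⁻¹ ∂μ
          + ∫⁻ ξ in s, ENNReal.ofReal (dist ξ z * a ξ ^ 2) ∂μ := by
      gcongr
      · exact fun ξ hξ => show r ≤ dist ξ z from not_lt.mp hξ.2
      · exact sdiff_subset
    _ = _ := by rw [setLIntegral_comp_dist_eq z (Ici r) fun d => ENNReal.ofReal (d ^ 3)⁻¹]; rfl
  calc ∫⁻ ξ in s, ENNReal.ofReal (a ξ / dist ξ z) ∂μ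
      ≤ ∫⁻ ξ in ball z r ∪ s \ ball z r, ENNReal.ofReal (a ξ / dist ξ z) ∂μ :=
        lintegral_mono_set fun ξ hξ => by by_cases h : ξ ∈ ball z r <;> simp [h, hξ]
    _ ≤ _ := (lintegral_union_le _ _ _).trans (add_le_add hball hannulus)
    _ = _ := (add_assoc _ _ _).symm

theorem setLIntegral_closedBall_dist_mul_le (z : E) {b : E → ℝ} (hb : ∀ ξ, 0 ≤ b ξ) :
    ∫⁻ ξ in closedBall z (4 / 5 * ‖z‖), ENNReal.ofReal (dist ξ z * b ξ) ∂μ ≤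
      4 * ∫⁻ ξ in {ξ | ‖z‖ / 5 ≤ ‖ξ‖}, ENNReal.ofReal (‖ξ‖ * b ξ) ∂μ := by
  have hnorm : ∀ ξ ∈ closedBall z (4 / 5 * ‖z‖), ‖z‖ / 5 ≤ ‖ξ‖ := fun ξ hξ => by
    linarith [norm_le_of_mem_closedBall (mem_closedBall_comm.mp hξ)]
  calc _ ≤ ∫⁻ ξ in closedBall z (4 / 5 * ‖z‖), ENNReal.ofReal (4 * (‖ξ‖ * b ξ)) ∂μ := by
        refine setLIntegral_mono' measurableSet_closedBall fun ξ hξ => ?_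
        have := hnorm ξ hξ
        rw [← mul_assoc]
        gcongr
        · exact hb ξ
        · linarith [mem_closedBall.mp hξ]
    _ ≤ ∫⁻ ξ in {ξ | ‖z‖ / 5 ≤ ‖ξ‖}, ENNReal.ofReal (4 * (‖ξ‖ * b ξ)) ∂μ :=
        lintegral_mono_set hnorm
    _ = _ := by
        simp_rw [ENNReal.ofReal_mul (by norm_num : (0 : ℝ) ≤ 4), ENNReal.ofReal_ofNat]
        exact lintegral_const_mul' _ _ (by simp)

theorem setLIntegral_closedBall_div_dist_le [μ.IsAddRightInvariant] (a : E → ℝ) (z : E)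
    {r δ : ℝ} (ha : ∀ ξ ∈ ball z r, a ξ ≤ δ) :
    ∫⁻ ξ in closedBall z (4 / 5 * ‖z‖), ENNReal.ofReal (a ξ / dist ξ z) ∂μ ≤
      ENNReal.ofReal δ * ∫⁻ x in ball 0 r, ENNReal.ofReal ‖x‖⁻¹ ∂μ
        + ∫⁻ x in {x | r ≤ ‖x‖}, ENNReal.ofReal (‖x‖ ^ 3)⁻¹ ∂μ
        + 4 * ∫⁻ ξ in {ξ | ‖z‖ / 5 ≤ ‖ξ‖}, ENNReal.ofReal (‖ξ‖ * a ξ ^ 2) ∂μ := by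
  refine (setLIntegral_div_dist_le a z ha measurableSet_closedBall).trans ?_
  gcongr
  exact setLIntegral_closedBall_dist_mul_le z fun ξ => sq_nonneg _

end KernelSplit

theorem weighted_gradient_integral_tendsto_zero_general
    (ω : ℂ → ℝ) (R₀ : ℝ)
    (hdir : IntegrableOn (fun z : ℂ => ‖z‖ * ‖fderiv ℝ ω z‖ ^ 2) {z : ℂ | R₀ < ‖z‖})
    (hgrad : ∀ ε > (0:ℝ), ∃ R : ℝ, ∀ z : ℂ, R ≤ ‖z‖ → ‖fderiv ℝ ω z‖ < ε) :
    ∀ ε > (0:ℝ), ∃ R : ℝ, R₀ < R ∧ ∀ z : ℂ, R ≤ ‖z‖ →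
      (∫ ξ in {ξ : ℂ | dist ξ z ≤ 4 / 5 * ‖z‖}, (1 / dist ξ z) * ‖fderiv ℝ ω ξ‖) < ε := by
  intro ε hε
  obtain ⟨r₁, δ, hδ, hkernel⟩ := exists_setLIntegral_inv_norm_add_tail_lt volume
    Complex.finrank_real_complex (ENNReal.ofReal_pos.mpr (by positivity : 0 < ε / 2)).ne'
  obtain ⟨Rg, hRg⟩ := hgrad δ hδ
  have htail := (hdir.tendsto_setLIntegral_norm_ge_atTop.comp (tendsto_id.atTop_div_const
    (by norm_num : (0 : ℝ) < 5))).eventually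
      (gt_mem_nhds (ENNReal.ofReal_pos.mpr (by positivity : 0 < ε / 8)))
  obtain ⟨R, hR⟩ := ((eventually_ge_atTop (Rg + r₁)).and
    (htail.and (eventually_gt_atTop R₀))).exists_forall_of_atTop
  refine ⟨R, (hR R le_rfl).2.2, fun z hz => ?_⟩
  obtain ⟨hzg, hzt, -⟩ := hR ‖z‖ hz
  have hgrad_ball : ∀ ξ ∈ ball z r₁, ‖fderiv ℝ ω ξ‖ ≤ δ := fun ξ hξ =>
    (hRg ξ (by linarith [norm_lt_of_mem_ball (mem_ball_comm.mp hξ)])).le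
  rw [integral_eq_lintegral_of_nonneg_ae (ae_of_all _ fun ξ => by positivity) (by fun_prop)]
  refine ENNReal.toReal_lt_of_lt_ofReal ?_
  simp_rw [one_div_mul_eq_div]
  calc _ ≤ _ := setLIntegral_closedBall_div_dist_le _ z hgrad_ball
    _ < ENNReal.ofReal (ε / 2) + 4 * ENNReal.ofReal (ε / 8) :=
      ENNReal.add_lt_add hkernel ((ENNReal.mul_lt_mul_iff_right (a := 4) (by norm_num)
        (by norm_num)).mpr hzt)
    _ = ENNReal.ofReal ε := by
      rw [← ENNReal.ofReal_ofNat 4, ← ENNReal.ofReal_mul (by norm_num),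
        ← ENNReal.ofReal_add (by positivity) (by positivity)]
      ring_nf

/-- Lemma 3.2: if the weighted Dirichlet-type integral `∫ r|∇ω|²` is finite on the
exterior domain `{|z| > R₀}` and `|∇ω| → 0` uniformly at infinity, then
`∫_{D_z} |∇ω(ξ)|/|ξ - z| dξ → 0` uniformly as `|z| → ∞`, where
`D_z = {ξ : |ξ - z| ≤ (4/5)|z|}`. -/
theorem weighted_gradient_integral_tendsto_zero
    (ω : ℂ → ℝ) (R₀ : ℝ) (hR₀ : 0 < R₀)
    (hsmooth : ContDiffOn ℝ 1 ω {z : ℂ | R₀ < ‖z‖})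
    (hdir : IntegrableOn (fun z : ℂ => ‖z‖ * ‖fderiv ℝ ω z‖ ^ 2) {z : ℂ | R₀ < ‖z‖})
    (hgrad : ∀ ε > (0:ℝ), ∃ R : ℝ, ∀ z : ℂ, R ≤ ‖z‖ → ‖fderiv ℝ ω z‖ < ε) :
    ∀ ε > (0:ℝ), ∃ R : ℝ, R₀ < R ∧ ∀ z : ℂ, R ≤ ‖z‖ →
      (∫ ξ in {ξ : ℂ | dist ξ z ≤ 4 / 5 * ‖z‖}, (1 / dist ξ z) * ‖fderiv ℝ ω ξ‖) < ε :=
  weighted_gradient_integral_tendsto_zero_general ω R₀ hdir hgrad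
end

section
/- Let $\mathbf{u}$ be a continuous bounded vector field on $\{z \in \mathbb{R}^2 : |z| > R_0\}$, and $\mathbf{u}_\infty \in \mathbb{R}^2$. Suppose: (a) there is a sequence of radii $R_n \in (2^n, 2^{n+1})$ with $\sup_{|\xi| = R_n} |\mathbf{u}(\xi) - \mathbf{u}_\infty| \to 0$ as $n \to \infty$; (b) $\sup_{0 < \rho \le \frac{4}{5}|z|} |\mathbf{u}(z) - \bar{\mathbf{u}}(z, \rho)| \to 0$ uniformly as $|z| \to \infty$, where $\bar{\mathbf{u}}(z,\rho)$ is the circle average; and (c) for each $z$ with large $|z|$ there exists $\rho_* \in (\frac{3}{4}|z|, \frac{4}{5}|z|)$ with $\sup_{|\xi - z| = \rho_*} |\mathbf{u}(\xi) - \bar{\mathbf{u}}(z, \rho_*)| = \varepsilon_z \to 0$ uniformly. Then $\mathbf{u}(z) \to \mathbf{u}_\infty$ uniformly as $|z| \to \infty$. -/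
/-!
For large `z`, the dyadic circle `|ξ| = Rₙ` with `Rₙ ∈ (|z|/4, |z|)` and the circle `|ξ - z| = ρ*`
from (c) intersect, because `|z| - ρ* < Rₙ < |z| + ρ*`: on the connected circle `|ξ| = Rₙ`,
`|ξ - z|` takes every value between `||z| - Rₙ|` and `|z| + Rₙ`. At a common point `ξ₀`,
`u(z) ≈ ū(z, ρ*) ≈ u(ξ₀) ≈ u∞`.
-/

open MeasureTheory Real Set Filter

/-- Mean value of a planar vector field over the circle of radius `ρ` centered at `z`. -/
noncomputable def circleAvgC (u : ℂ → ℂ) (z : ℂ) (ρ : ℝ) : ℂ :=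
  (2 * Real.pi)⁻¹ • ∫ θ in (0:ℝ)..(2 * Real.pi), u (z + ρ * Complex.exp (θ * Complex.I))

open Metric

theorem exists_mem_sphere_dist_eq {E : Type*} [NormedAddCommGroup E] [NormedSpace ℝ E]
    (hE : 1 < Module.rank ℝ E) {z : E} (hz : z ≠ 0) {r ρ : ℝ} (hr : 0 ≤ r)
    (hlow : |‖z‖ - r| ≤ ρ) (hhigh : ρ ≤ ‖z‖ + r) : ∃ ξ ∈ sphere (0 : E) r, dist ξ z = ρ := by
  have hz' : 0 < ‖z‖ := norm_pos_iff.mpr hz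
  set c := r / ‖z‖
  have hc : 0 ≤ c := div_nonneg hr hz'.le
  have hcz : c * ‖z‖ = r := div_mul_cancel₀ r hz'.ne'
  have hnear : dist (c • z) z = |‖z‖ - r| := by
    rw [dist_eq_norm, show c • z - z = (c - 1) • z by rw [sub_smul, one_smul], norm_smul,
      Real.norm_eq_abs, ← abs_norm z, ← abs_mul, sub_mul, hcz, one_mul, abs_norm, abs_sub_comm]
  have hfar : dist (-(c • z)) z = ‖z‖ + r := by
    rw [dist_eq_norm, show -(c • z) - z = -((c + 1) • z) by rw [add_smul, one_smul, neg_add'],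
      norm_neg, norm_smul, Real.norm_of_nonneg (by positivity), add_mul, hcz, one_mul, add_comm]
  have hsphere : ‖c • z‖ = r := by
    rw [norm_smul, Real.norm_of_nonneg hc, hcz]
  exact (isConnected_sphere hE 0 hr).isPreconnected.intermediate_value
    (a := c • z) (b := -(c • z)) (by simpa using hsphere) (by simpa using hsphere)
    (continuous_id.dist continuous_const).continuousOn ⟨hnear ▸ hlow, hfar ▸ hhigh⟩

theorem exists_pow_le_lt_pow_succ_of_pow_le {R : Type*} [Field R] [LinearOrder R]
    [IsStrictOrderedRing R] [Archimedean R] {x y : R} {N : ℕ} (hy : 1 < y) (h : y ^ N ≤ x) :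
    ∃ n ≥ N, y ^ n ≤ x ∧ x < y ^ (n + 1) := by
  have hyN : 0 < y ^ N := pow_pos (zero_lt_one.trans hy) N
  obtain ⟨k, hk, hk'⟩ := exists_nat_pow_near ((one_le_div hyN).mpr h) hy
  refine ⟨N + k, N.le_add_right k, ?_, ?_⟩
  · rwa [pow_add, ← le_div_iff₀' hyN]
  · rwa [add_assoc, pow_add, ← div_lt_iff₀' hyN]

theorem exists_ge_dyadic_mem_Ioo {Rseq : ℕ → ℝ}
    (hRseq : ∀ n : ℕ, Rseq n ∈ Ioo ((2:ℝ) ^ n) ((2:ℝ) ^ (n + 1))) {N : ℕ} {d : ℝ}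
    (hd : (2:ℝ) ^ (N + 1) ≤ d) : ∃ n ≥ N, Rseq n ∈ Ioo (d / 4) d := by
  obtain ⟨m, hm, hlow, hhigh⟩ := exists_pow_le_lt_pow_succ_of_pow_le one_lt_two hd
  obtain ⟨n, rfl⟩ : ∃ n, m = n + 1 := ⟨m - 1, by omega⟩
  obtain ⟨h₁, h₂⟩ := hRseq n
  rw [pow_succ, pow_succ] at hhigh
  exact ⟨n, by omega, by linarith, by linarith⟩

theorem uniform_convergence_of_velocity_general
    (u : ℂ → ℂ) (uinf : ℂ)
    (Rseq : ℕ → ℝ) (hRseq : ∀ n : ℕ, Rseq n ∈ Set.Ioo ((2:ℝ) ^ n) ((2:ℝ) ^ (n + 1)))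
    (hseq : ∀ ε > (0:ℝ), ∃ N : ℕ, ∀ n ≥ N, ∀ ξ : ℂ, ‖ξ‖ = Rseq n → ‖u ξ - uinf‖ < ε)
    (havg : ∀ ε > (0:ℝ), ∃ R : ℝ, ∀ z : ℂ, R ≤ ‖z‖ →
      ∀ ρ : ℝ, 0 < ρ → ρ ≤ 4 / 5 * ‖z‖ → ‖u z - circleAvgC u z ρ‖ < ε)
    (hcirc : ∀ ε > (0:ℝ), ∃ R : ℝ, ∀ z : ℂ, R ≤ ‖z‖ →
      ∃ ρstar ∈ Set.Ioo (3 / 4 * ‖z‖) (4 / 5 * ‖z‖),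
        ∀ ξ : ℂ, dist ξ z = ρstar → ‖u ξ - circleAvgC u z ρstar‖ < ε) :
    ∀ ε > (0:ℝ), ∃ R : ℝ, ∀ z : ℂ, R ≤ ‖z‖ → ‖u z - uinf‖ < ε := by
  intro ε hε
  obtain ⟨N, hN⟩ := hseq (ε / 3) (by positivity)
  obtain ⟨R₁, hR₁⟩ := havg (ε / 3) (by positivity)
  obtain ⟨R₂, hR₂⟩ := hcirc (ε / 3) (by positivity)
  refine ⟨max (max R₁ R₂) (2 ^ (N + 1)), fun z hz => ?_⟩
  obtain ⟨⟨hz₁, hz₂⟩, hzN⟩ := max_le_iff.mp hz |>.imp_left max_le_iff.mp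
  have hz0 : 0 < ‖z‖ := lt_of_lt_of_le (by positivity) hzN
  obtain ⟨n, hn, hRlow, hRhigh⟩ := exists_ge_dyadic_mem_Ioo hRseq hzN
  obtain ⟨ρ, ⟨hρlow, hρhigh⟩, hρ⟩ := hR₂ z hz₂
  obtain ⟨ξ, hξ, hξz⟩ := exists_mem_sphere_dist_eq (r := Rseq n)
    (by simp [Complex.rank_real_complex]) (norm_pos_iff.mp hz0) (by linarith) (abs_le.mpr ⟨by linarith, by linarith⟩) (by linarith)
  calc ‖u z - uinf‖
      ≤ ‖u z - circleAvgC u z ρ‖ + ‖circleAvgC u z ρ - u ξ‖ + ‖u ξ - uinf‖ := by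
        simpa only [dist_eq_norm] using dist_triangle4 (u z) (circleAvgC u z ρ) (u ξ) uinf
    _ < ε / 3 + ε / 3 + ε / 3 := by
        gcongr
        · exact hR₁ z hz₁ ρ (by linarith) hρhigh.le
        · exact norm_sub_rev (u ξ) _ ▸ hρ ξ hξz
        · exact hN n hn ξ (mem_sphere_zero_iff_norm.mp hξ)
    _ = ε := by ring

/-- The concluding argument of Lemma 3.3(ii): from (a) convergence `u → u∞` on a
dyadic sequence of circles `|ξ| = Rₙ ∈ (2ⁿ, 2ⁿ⁺¹)`, (b) uniform closeness of `u(z)` to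
all its circle averages `ū(z,ρ)` with `0 < ρ ≤ (4/5)|z|`, and (c) for each large `z`
some circle `|ξ - z| = ρ*`, `ρ* ∈ ((3/4)|z|, (4/5)|z|)`, on which `u` is uniformly
close to `ū(z,ρ*)`, it follows that `u(z) → u∞` uniformly as `|z| → ∞`. -/
theorem uniform_convergence_of_velocity
    (u : ℂ → ℂ) (uinf : ℂ) (R₀ C : ℝ)
    (hcont : ContinuousOn u {z : ℂ | R₀ < ‖z‖})
    (hbound : ∀ z : ℂ, R₀ < ‖z‖ → ‖u z‖ ≤ C)
    (Rseq : ℕ → ℝ) (hRseq : ∀ n : ℕ, Rseq n ∈ Set.Ioo ((2:ℝ) ^ n) ((2:ℝ) ^ (n + 1)))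
    (hseq : ∀ ε > (0:ℝ), ∃ N : ℕ, ∀ n ≥ N, ∀ ξ : ℂ, ‖ξ‖ = Rseq n → ‖u ξ - uinf‖ < ε)
    (havg : ∀ ε > (0:ℝ), ∃ R : ℝ, ∀ z : ℂ, R ≤ ‖z‖ →
      ∀ ρ : ℝ, 0 < ρ → ρ ≤ 4 / 5 * ‖z‖ → ‖u z - circleAvgC u z ρ‖ < ε)
    (hcirc : ∀ ε > (0:ℝ), ∃ R : ℝ, ∀ z : ℂ, R ≤ ‖z‖ →
      ∃ ρstar ∈ Set.Ioo (3 / 4 * ‖z‖) (4 / 5 * ‖z‖),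
        ∀ ξ : ℂ, dist ξ z = ρstar → ‖u ξ - circleAvgC u z ρstar‖ < ε) :
    ∀ ε > (0:ℝ), ∃ R : ℝ, ∀ z : ℂ, R ≤ ‖z‖ → ‖u z - uinf‖ < ε :=
  uniform_convergence_of_velocity_general u uinf Rseq hRseq hseq havg hcirc
end
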